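/- arXiv:2510.27177 — 7 statements merged into one kernel-verified Lean document; each statement's English description precedes it below -/
import Mathlib

section
/- Under the same sampling scheme (first index from distribution q on [d], then k-1 indices uniformly without replacement from the rest), for any distinct i, j in [d], the probability that both i and j belong to B equals (k-1)(k-2)/((d-1)(d-2)) + ((k-1)(d-k)/((d-1)(d-2))) * (q_i + q_j). -/
/-!
Condition on the first index `a`. The event `i, j ∈ insert a A` says that the uniform
`(k-1)`-subset `A` of the other `d - 1` indices contains `{i, j}.erase a`, which has one
element if `a ∈ {i, j}` and two otherwise. By `Nat.choose_mul`, a uniform `n`-subset of an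
`m`-set contains a fixed `r`-set with probability `C(n, r) / C(m, r)`, so the conditional
probability is `(k-1)/(d-1)` if `a ∈ {i, j}` and `(k-1)(k-2)/((d-1)(d-2))` otherwise.
Averaging over `a ~ q` with `∑ q = 1` gives the formula.
-/

open Finset

theorem Finset.card_filter_powersetCard_subset_div_card {α : Type*} [DecidableEq α]
    {s t : Finset α} {n : ℕ} (hst : s ⊆ t) (hsn : #s ≤ n) (hnt : n ≤ #t) :
    ((#((t.powersetCard n).filter (s ⊆ ·)) : ℕ) : ℝ) / (#(t.powersetCard n) : ℕ) =
      (n.choose #s : ℝ) / ((#t).choose #s) := by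
  rw [card_filter_powersetCard_subset s t n hst hsn, card_powersetCard,
    div_eq_div_iff (by positivity [Nat.choose_pos hnt])
      (by positivity [Nat.choose_pos (hsn.trans hnt)])]
  norm_cast
  rw [mul_comm, ← Nat.choose_mul hsn, mul_comm]

theorem Finset.mem_insert_and_mem_insert_iff {α : Type*} [DecidableEq α] {a i j : α}
    {s : Finset α} : i ∈ insert a s ∧ j ∈ insert a s ↔ ({i, j} : Finset α).erase a ⊆ s := by
  simp only [subset_iff, mem_erase, mem_insert, mem_singleton]
  grind

theorem Finset.sum_mul_ite_mem {ι R : Type*} [Fintype ι] [DecidableEq ι] [CommRing R]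
    (q : ι → R) (s : Finset ι) (a b : R) :
    ∑ x, q x * (if x ∈ s then a else b) = b * ∑ x, q x + (a - b) * ∑ x ∈ s, q x := by
  have h x : q x * (if x ∈ s then a else b) =
      b * q x + (a - b) * (if x ∈ s then q x else 0) := by
    split_ifs <;> ring
  simp only [h, sum_add_distrib, ← mul_sum, sum_ite_mem, univ_inter]

theorem card_filter_pair_mem_insert_div_card {α : Type*} [Fintype α] [DecidableEq α]
    {i j : α} (hij : i ≠ j) (a : α) {k : ℕ} (hk : 3 ≤ k) (hkα : k ≤ Fintype.card α) :
    ((#(((univ.erase a).powersetCard (k - 1)).filter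
        (fun A => i ∈ insert a A ∧ j ∈ insert a A)) : ℕ) : ℝ) /
      (#((univ.erase a).powersetCard (k - 1)) : ℕ) =
    if a ∈ ({i, j} : Finset α) then ((k : ℝ) - 1) / ((Fintype.card α : ℝ) - 1)
    else ((k : ℝ) - 1) * ((k : ℝ) - 2) /
      (((Fintype.card α : ℝ) - 1) * ((Fintype.card α : ℝ) - 2)) := by
  have hcard : #(univ.erase a) = Fintype.card α - 1 := by simp
  have hpair : #(({i, j} : Finset α).erase a) ≤ 2 := card_erase_le.trans card_le_two
  simp only [mem_insert_and_mem_insert_iff]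
  rw [card_filter_powersetCard_subset_div_card (erase_subset_erase _ (subset_univ _))
    (by omega) (by omega), hcard]
  have hk1 : ((k - 1 : ℕ) : ℝ) = k - 1 := Nat.cast_pred (by omega)
  have hα1 : ((Fintype.card α - 1 : ℕ) : ℝ) = Fintype.card α - 1 := Nat.cast_pred (by omega)
  split_ifs with ha
  · simp [card_erase_of_mem ha, card_pair hij, hk1, hα1]
  · have hα : (3 : ℝ) ≤ Fintype.card α := by exact_mod_cast hk.trans hkα
    rw [erase_eq_of_notMem ha, card_pair hij, Nat.cast_choose_two, Nat.cast_choose_two, hk1, hα1,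
      div_eq_div_iff (by nlinarith) (by nlinarith)]
    ring

theorem stmt_4_general (d k : ℕ) (hk : 3 ≤ k) (hkd : k ≤ d)
    (q : Fin d → ℝ) (hq1 : ∑ i, q i = 1)
    (i j : Fin d) (hij : i ≠ j) :
    ∑ j' : Fin d, q j' *
        (((((univ.erase j').powersetCard (k - 1)).filter
              (fun A => i ∈ insert j' A ∧ j ∈ insert j' A)).card : ℝ) /
          ((((univ.erase j').powersetCard (k - 1)).card : ℝ))) =
      ((k : ℝ) - 1) * ((k : ℝ) - 2) / (((d : ℝ) - 1) * ((d : ℝ) - 2)) +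
        ((k : ℝ) - 1) * ((d : ℝ) - k) / (((d : ℝ) - 1) * ((d : ℝ) - 2)) * (q i + q j) := by
  have hd : (3 : ℝ) ≤ d := by exact_mod_cast hk.trans hkd
  have hd1 : (d : ℝ) - 1 ≠ 0 := by linarith
  have hd2 : (d : ℝ) - 2 ≠ 0 := by linarith
  have hkd' : k ≤ Fintype.card (Fin d) := by simpa using hkd
  simp only [card_filter_pair_mem_insert_div_card hij _ hk hkd', Fintype.card_fin,
    sum_mul_ite_mem, hq1, sum_pair hij]
  field_simp
  ring

/-- Sampling scheme: the first index `j'` is drawn from the distribution `q` on `Fin d`,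
then `k-1` further distinct indices are drawn uniformly without replacement, i.e. a
uniformly random `(k-1)`-subset `A` of `univ.erase j'` is chosen, and `B = insert j' A`.
The probability that both `i` and `j` belong to `B` equals the stated closed form. -/
theorem stmt_4 (d k : ℕ) (hk : 3 ≤ k) (hkd : k ≤ d)
    (q : Fin d → ℝ) (hq0 : ∀ i, 0 ≤ q i) (hq1 : ∑ i, q i = 1)
    (i j : Fin d) (hij : i ≠ j) :
    ∑ j' : Fin d, q j' *
        (((((univ.erase j').powersetCard (k - 1)).filter
              (fun A => i ∈ insert j' A ∧ j ∈ insert j' A)).card : ℝ) /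
          ((((univ.erase j').powersetCard (k - 1)).card : ℝ))) =
      ((k : ℝ) - 1) * ((k : ℝ) - 2) / (((d : ℝ) - 1) * ((d : ℝ) - 2)) +
        ((k : ℝ) - 1) * ((d : ℝ) - k) / (((d : ℝ) - 1) * ((d : ℝ) - 2)) * (q i + q j) :=
  stmt_4_general d k hk hkd q hq1 i j hij
end

section
/- Let w* be a k-sparse vector in R^d with support S, and let w_hat be any vector with ||w_hat||_1 \le ||w*||_1. Let S_s be any subset of [d] of size k such that |w_hat_i| \ge |w_hat_j| for all i in S_s and j not in S_s (the top-k coordinates of w_hat in absolute value). Define w = w*(S \cap S_s), the restriction of w* to S \cap S_s (zero elsewhere). Then ||w - w*||_1 \le ||w_hat - w*||_1. -/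
open Finset

/-- Let `w*` be a `k`-sparse vector with support `S`, `ŵ` any vector with
`‖ŵ‖₁ ≤ ‖w*‖₁`, and `Ss` a set of `k` coordinates of `ŵ` of largest absolute value.
Then with `w = w*(S ∩ Ss)` one has `‖w - w*‖₁ ≤ ‖ŵ - w*‖₁`. -/
theorem stmt_7 (d k : ℕ) (wstar what : Fin d → ℝ) (S Ss : Finset (Fin d))
    (hS : ∀ i, wstar i ≠ 0 ↔ i ∈ S) (hSk : S.card ≤ k)
    (hl1 : ∑ i, |what i| ≤ ∑ i, |wstar i|)
    (hSs : Ss.card = k)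
    (htop : ∀ i ∈ Ss, ∀ j ∉ Ss, |what j| ≤ |what i|) :
    ∑ i, |(if i ∈ S ∩ Ss then wstar i else 0) - wstar i| ≤ ∑ i, |what i - wstar i| := by
  -- rewrite LHS as a sum over S \ Ss
  have hterm : ∀ i, |(if i ∈ S ∩ Ss then wstar i else 0) - wstar i|
      = if i ∈ S \ Ss then |wstar i| else 0 := by
    intro i
    by_cases h : i ∈ S ∩ Ss
    · simp [h, mem_sdiff, (mem_inter.mp h).2]
    · by_cases hs : i ∈ S
      · have hss : i ∉ Ss := fun hss => h (mem_inter.mpr ⟨hs, hss⟩)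
        simp [h, mem_sdiff, hs, hss, abs_sub_comm]
      · have hz : wstar i = 0 := by
          by_contra hne; exact hs ((hS i).mp hne)
        simp [h, hz, mem_sdiff, hs]
  have hLHS : ∑ i, |(if i ∈ S ∩ Ss then wstar i else 0) - wstar i|
      = ∑ i ∈ S \ Ss, |wstar i| := by
    rw [Finset.sum_congr rfl fun i _ => hterm i, Finset.sum_ite_mem,
      Finset.univ_inter]
  rw [hLHS]
  -- cardinality comparison
  have hcard : (S \ Ss).card ≤ (Ss \ S).card := by
    have h1 := Finset.card_sdiff_add_card_inter S Ss
    have h2 := Finset.card_sdiff_add_card_inter Ss S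
    rw [Finset.inter_comm] at h2
    omega
  rcases (S \ Ss).eq_empty_or_nonempty with he | hne
  · rw [he]
    simp only [Finset.sum_empty]
    exact Finset.sum_nonneg fun i _ => abs_nonneg _
  · have hne' : (Ss \ S).Nonempty := by
      rw [← Finset.card_pos] at hne ⊢; omega
    set m := (Ss \ S).inf' hne' (fun j => |what j|) with hm
    have step1 : ∑ i ∈ S \ Ss, |wstar i|
        ≤ ∑ i ∈ S \ Ss, (|wstar i - what i| + |what i|) := by
      refine Finset.sum_le_sum fun i _ => ?_
      linarith [abs_sub_abs_le_abs_sub (wstar i) (what i)]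
    have step2 : ∑ i ∈ S \ Ss, |what i| ≤ ∑ j ∈ Ss \ S, |what j| := by
      calc ∑ i ∈ S \ Ss, |what i| ≤ (S \ Ss).card • m := by
            refine Finset.sum_le_card_nsmul _ _ _ fun i hi => ?_
            refine Finset.le_inf' hne' _ fun j hj => ?_
            exact htop j (Finset.mem_sdiff.mp hj).1 i (Finset.mem_sdiff.mp hi).2
        _ ≤ (Ss \ S).card • m := by
            have hm0 : (0:ℝ) ≤ m := Finset.le_inf' hne' _ fun j _ => abs_nonneg _
            exact nsmul_le_nsmul_left hm0 hcard
        _ ≤ ∑ j ∈ Ss \ S, |what j| :=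
            Finset.card_nsmul_le_sum _ _ _ fun j hj => Finset.inf'_le _ hj
    have step3 : ∀ j ∈ Ss \ S, |what j| = |what j - wstar j| := by
      intro j hj
      have : wstar j = 0 := by
        by_contra hne2
        exact (Finset.mem_sdiff.mp hj).2 ((hS j).mp hne2)
      simp [this]
    calc ∑ i ∈ S \ Ss, |wstar i|
        ≤ ∑ i ∈ S \ Ss, (|wstar i - what i| + |what i|) := step1
      _ = ∑ i ∈ S \ Ss, |wstar i - what i| + ∑ i ∈ S \ Ss, |what i| :=
          Finset.sum_add_distrib
      _ ≤ ∑ i ∈ S \ Ss, |wstar i - what i| + ∑ j ∈ Ss \ S, |what j| := by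
          linarith
      _ = ∑ i ∈ S \ Ss, |what i - wstar i| + ∑ j ∈ Ss \ S, |what j - wstar j| := by
          rw [Finset.sum_congr rfl fun i _ => abs_sub_comm (wstar i) (what i),
            Finset.sum_congr rfl step3]
      _ = ∑ i ∈ (S \ Ss) ∪ (Ss \ S), |what i - wstar i| := by
          rw [Finset.sum_union (Finset.sdiff_disjoint.mono_right Finset.sdiff_subset)]
      _ ≤ ∑ i, |what i - wstar i| :=
          Finset.sum_le_sum_of_subset_of_nonneg (Finset.subset_univ _)
            fun i _ _ => abs_nonneg _
end

section
/- Let w* in R^d have support S, and let w_hat be any vector in R^d satisfying ||w_hat(S^c)||_1 \le ||w_hat(S) - w*||_1 (the cone condition). Let S_s be a set consisting of k coordinates of w_hat of largest absolute value, where |S| \le k. Then ||w_hat(S_s) - w*||_1 \le 3 ||w_hat(S) - w*||_1. -/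
open Finset

lemma sum_le_sum_of_card_le_of_forall_le {d : ℕ} (f : Fin d → ℝ) (hf : ∀ i, 0 ≤ f i)
    (A B : Finset (Fin d)) (hcard : A.card ≤ B.card)
    (h : ∀ a ∈ A, ∀ b ∈ B, f a ≤ f b) :
    ∑ a ∈ A, f a ≤ ∑ b ∈ B, f b := by
  rcases A.eq_empty_or_nonempty with rfl | hA
  · simpa using Finset.sum_nonneg (fun b _ => hf b)
  · have hB : B.Nonempty := Finset.card_pos.mp (lt_of_lt_of_le (Finset.card_pos.mpr hA) hcard)
    obtain ⟨b₀, hb₀, hmin⟩ := B.exists_min_image f hB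
    calc ∑ a ∈ A, f a ≤ A.card • f b₀ :=
          Finset.sum_le_card_nsmul A f (f b₀) (fun a ha => h a ha b₀ hb₀)
      _ ≤ B.card • f b₀ := by
          rw [nsmul_eq_mul, nsmul_eq_mul]
          exact mul_le_mul_of_nonneg_right (by exact_mod_cast hcard) (hf b₀)
      _ ≤ ∑ b ∈ B, f b := Finset.card_nsmul_le_sum B f (f b₀) (fun b hb => hmin b hb)

/-- If `w*` is supported on `S`, `ŵ` satisfies the cone condition
`‖ŵ(Sᶜ)‖₁ ≤ ‖ŵ(S) - w*‖₁`, and `Ss` consists of `k ≥ |S|` coordinates of `ŵ` of largest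
absolute value, then `‖ŵ(Ss) - w*‖₁ ≤ 3‖ŵ(S) - w*‖₁`. -/
theorem stmt_8 (d k : ℕ) (hkd : k ≤ d) (wstar what : Fin d → ℝ) (S Ss : Finset (Fin d))
    (hsupp : ∀ i, i ∉ S → wstar i = 0) (hSk : S.card ≤ k)
    (hcone : ∑ i, |(if i ∉ S then what i else 0)| ≤ ∑ i, |(if i ∈ S then what i else 0) - wstar i|)
    (hSs : Ss.card = k)
    (htop : ∀ i ∈ Ss, ∀ j ∉ Ss, |what j| ≤ |what i|) :
    ∑ i, |(if i ∈ Ss then what i else 0) - wstar i| ≤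
      3 * ∑ i, |(if i ∈ S then what i else 0) - wstar i| := by
  have hE : (∑ i, |(if i ∈ S then what i else 0) - wstar i|) = ∑ i ∈ S, |what i - wstar i| := by
    rw [← Finset.sum_subset (Finset.subset_univ S) (fun i _ hi => by simp [hi, hsupp i hi])]
    exact Finset.sum_congr rfl fun i hi => by simp [hi]
  set E := ∑ i ∈ S, |what i - wstar i| with hEdef
  -- cone sum rewrite
  have hC : (∑ i, |(if i ∉ S then what i else 0)|) = ∑ i ∈ Sᶜ, |what i| := by
    rw [← Finset.sum_subset (Finset.subset_univ Sᶜ)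
        (fun i _ hi => by simp at hi; simp [hi])]
    exact Finset.sum_congr rfl fun i hi => by simp [Finset.mem_compl.mp hi]
  have hcone' : ∑ i ∈ Sᶜ, |what i| ≤ E := by rw [← hC, ← hE]; exact hcone
  -- LHS decomposition
  have hL : (∑ i, |(if i ∈ Ss then what i else 0) - wstar i|) =
      ∑ i ∈ Ss, |what i - wstar i| + ∑ i ∈ S \ Ss, |wstar i| := by
    rw [← Finset.sum_add_sum_compl Ss (fun i => |(if i ∈ Ss then what i else 0) - wstar i|)]
    congr 1
    · exact Finset.sum_congr rfl fun i hi => by simp [hi]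
    · have h1 : ∑ i ∈ Ssᶜ, |(if i ∈ Ss then what i else 0) - wstar i|
          = ∑ i ∈ Ssᶜ, |wstar i| :=
        Finset.sum_congr rfl fun i hi => by
          simp [Finset.mem_compl.mp hi]
      rw [h1]
      refine (Finset.sum_subset ?_ ?_).symm
      · intro i hi
        simp only [Finset.mem_sdiff] at hi
        simpa using hi.2
      · intro i hi hni
        simp only [Finset.mem_sdiff, not_and, not_not] at hni
        by_cases hiS : i ∈ S
        · exact absurd (hni hiS) (Finset.mem_compl.mp hi)
        · simp [hsupp i hiS]
  -- split Ss sum into Ss ∩ S and Ss \ S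
  have hsplit : ∑ i ∈ Ss, |what i - wstar i|
      = ∑ i ∈ Ss ∩ S, |what i - wstar i| + ∑ i ∈ Ss \ S, |what i| := by
    rw [← Finset.sum_inter_add_sum_sdiff Ss S (fun i => |what i - wstar i|)]
    congr 1
    refine Finset.sum_congr rfl fun i hi => ?_
    rw [hsupp i (Finset.mem_sdiff.mp hi).2, sub_zero]
  -- bound on the tail sums of |what| outside S
  have htail : ∑ i ∈ Ss \ S, |what i| ≤ E :=
    le_trans (Finset.sum_le_sum_of_subset_of_nonneg
      (fun i hi => Finset.mem_compl.mpr (Finset.mem_sdiff.mp hi).2)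
      (fun i _ _ => abs_nonneg _)) hcone'
  -- card inequality
  have hcard : (S \ Ss).card ≤ (Ss \ S).card := by
    have h1 : (S \ Ss).card + (S ∩ Ss).card = S.card := Finset.card_sdiff_add_card_inter S Ss
    have h2 : (Ss \ S).card + (Ss ∩ S).card = Ss.card := Finset.card_sdiff_add_card_inter Ss S
    have h3 : (S ∩ Ss).card = (Ss ∩ S).card := by rw [Finset.inter_comm]
    omega
  -- swap sum
  have hswap : ∑ i ∈ S \ Ss, |what i| ≤ ∑ i ∈ Ss \ S, |what i| := by
    refine sum_le_sum_of_card_le_of_forall_le _ (fun i => abs_nonneg _) _ _ hcard ?_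
    intro a ha b hb
    exact htop b (Finset.mem_sdiff.mp hb).1 a (Finset.mem_sdiff.mp ha).2
  -- triangle on S \ Ss
  have htri : ∑ i ∈ S \ Ss, |wstar i|
      ≤ ∑ i ∈ S \ Ss, |what i - wstar i| + ∑ i ∈ S \ Ss, |what i| := by
    rw [← Finset.sum_add_distrib]
    refine Finset.sum_le_sum fun i _ => ?_
    have := abs_sub_abs_le_abs_sub (what i) (wstar i)
    have h := abs_sub (what i) (wstar i)
    calc |wstar i| = |what i - (what i - wstar i)| := by ring_nf
      _ ≤ |what i| + |what i - wstar i| := abs_sub _ _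
      _ = |what i - wstar i| + |what i| := add_comm _ _
  -- combine the S-parts
  have hSparts : ∑ i ∈ Ss ∩ S, |what i - wstar i| + ∑ i ∈ S \ Ss, |what i - wstar i| = E := by
    rw [Finset.inter_comm, hEdef, ← Finset.sum_inter_add_sum_sdiff S Ss (fun i => |what i - wstar i|)]
  rw [hL, hsplit, hE]
  have hG : ∑ i ∈ S \ Ss, |what i| ≤ E := le_trans hswap htail
  linarith [htri, hSparts, htail, hG]
end

section
/- Let X_1, ..., X_n be a bounded martingale difference sequence with |X_k| \le a with respect to a filtration, and suppose the sum of conditional variances \Sigma_n^2 = \sum_{k=1}^n E[X_k^2 | H_{k-1}] is at most v, where v is a random variable taking values in [a_1 n, a_2 n] for constants 0 < a_1 < a_2. Then for any \beta > 1 and \delta in (0,1), with probability at least 1 - (1 + log_\beta(a_2/a_1)) \delta, the maximum over t \le n of Z_t = \sum_{k=1}^t X_k is less than (2/3) a ln(1/\delta) + sqrt(2 \beta v ln(1/\delta)). -/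
/-!
Bernstein's method: for `x ≤ u < 3`, `exp x ≤ 1 + x + x² / (2 (1 - u / 3))`, so with
`κ = θ² / (2 (1 - θ a / 3))` the process `exp (θ Z_t - κ Σ_t²)` is a nonnegative supermartingale
starting at `1`. Ville's maximal inequality then gives Freedman's bound
`P(Σ_n² ≤ w, max_{t ≤ n} Z_t ≥ (2/3) a l + √(2 w l)) ≤ e^{-l}` for each deterministic `w`.
For the random `v`, cover `[a₁ n, a₂ n]` by the `M = ⌈log_β (a₂ / a₁)⌉ ≤ 1 + log_β (a₂ / a₁)`
intervals `[β^j a₁ n, β^{j+1} a₁ n]`; on the `j`-th one apply Freedman's bound with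
`w = β^{j+1} a₁ n ≤ β v` and take a union bound.
-/

open MeasureTheory Finset
open scoped ENNReal

namespace Real

theorem exp_le_one_add_add_sq_div_two_of_nonpos {x : ℝ} (hx : x ≤ 0) :
    exp x ≤ 1 + x + x ^ 2 / 2 := by
  have hanti : Antitone fun y : ℝ => 1 + y + y ^ 2 / 2 - exp y :=
    antitone_of_hasDerivAt_nonpos (f' := fun y => 1 + y - exp y)
      (fun y => by
        refine ((((hasDerivAt_id' y).const_add 1).add ((hasDerivAt_pow 2 y).div_const 2)).sub
          (hasDerivAt_exp y)).congr_deriv ?_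
        norm_num)
      (fun y => by simp only [Pi.zero_apply]; linarith [add_one_le_exp y])
  simpa using hanti hx

theorem exp_le_one_add_add_sq_div_of_nonneg {x u : ℝ} (hx : 0 ≤ x) (hxu : x ≤ u) (hu : u < 3) :
    exp x ≤ 1 + x + x ^ 2 / (2 * (1 - u / 3)) := by
  have hr0 : 0 ≤ u / 3 := by linarith
  have hr1 : u / 3 < 1 := by linarith
  have hsum : Summable fun n : ℕ => x ^ n / n.factorial := summable_pow_div_factorial x
  have hexp : exp x = 1 + x + ∑' n : ℕ, x ^ (n + 2) / (n + 2).factorial := by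
    rw [exp_eq_exp_ℝ, NormedSpace.exp_eq_tsum_div]
    dsimp only
    rw [← hsum.sum_add_tsum_nat_add 2]
    norm_num [Finset.sum_range_succ]
  have hterm (n : ℕ) : x ^ (n + 2) / (n + 2).factorial ≤ x ^ 2 / 2 * (u / 3) ^ n := by
    have hfac : (2 * 3 ^ n : ℝ) ≤ (n + 2).factorial := by
      rw [add_comm n 2]; exact_mod_cast Nat.factorial_mul_pow_le_factorial (m := 2) (n := n)
    rw [div_le_iff₀ (by positivity)]
    calc x ^ (n + 2) ≤ x ^ 2 * u ^ n := by rw [pow_add, mul_comm]; gcongr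
      _ = x ^ 2 / 2 * (u / 3) ^ n * (2 * 3 ^ n) := by rw [div_pow]; field_simp
      _ ≤ x ^ 2 / 2 * (u / 3) ^ n * (n + 2).factorial := by gcongr
  have htail := ((summable_nat_add_iff 2).2 hsum).tsum_le_tsum hterm
    ((summable_geometric_of_lt_one hr0 hr1).mul_left _)
  rw [tsum_mul_left, tsum_geometric_of_lt_one hr0 hr1] at htail
  rw [hexp, ← div_div, div_eq_mul_inv _ (1 - u / 3)]
  linarith

theorem exp_le_one_add_add_sq_div {x u : ℝ} (hxu : x ≤ u) (hu0 : 0 ≤ u) (hu : u < 3) :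
    exp x ≤ 1 + x + x ^ 2 / (2 * (1 - u / 3)) := by
  rcases le_total x 0 with hx | hx
  · calc exp x ≤ 1 + x + x ^ 2 / 2 := exp_le_one_add_add_sq_div_two_of_nonpos hx
      _ ≤ 1 + x + x ^ 2 / (2 * (1 - u / 3)) := by
        gcongr
        · linarith
        · linarith
  · exact exp_le_one_add_add_sq_div_of_nonneg hx hxu hu

theorem le_pow_natCeil_logb {b x : ℝ} (hb : 1 < b) (hx : 0 < x) : x ≤ b ^ ⌈logb b x⌉₊ := by
  rw [← rpow_natCast]
  exact (logb_le_iff_le_rpow hb hx).1 (Nat.le_ceil _)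

end Real

theorem exists_pow_le_le_pow_succ {β r : ℝ} {M : ℕ} (hβ : 1 < β) (hM : 0 < M) (hr : 1 ≤ r)
    (hrM : r ≤ β ^ M) : ∃ j < M, β ^ j ≤ r ∧ r ≤ β ^ (j + 1) := by
  obtain ⟨j, hjr, hrj⟩ := exists_nat_pow_near hr hβ
  by_cases hjM : j < M
  · exact ⟨j, hjM, hjr, hrj.le⟩
  · refine ⟨M - 1, by omega, ?_, by rwa [Nat.sub_add_cancel hM]⟩
    exact (pow_le_pow_right₀ hβ.le (by omega)).trans hjr

/-- The witness is `θ = 2 l / T` with `T = (2/3) a l + √(2 w l)`, for which the right-hand side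
equals `l (2 - √(2 w l) / T)`. -/
theorem exists_bernstein_exponent {a w l : ℝ} (ha : 0 ≤ a) (hw : 0 < w) (hl : 0 < l) :
    ∃ θ : ℝ, 0 < θ ∧ θ * a < 3 ∧
      l ≤ θ * (2 / 3 * a * l + Real.sqrt (2 * w * l)) - θ ^ 2 / (2 * (1 - θ * a / 3)) * w := by
  set r := Real.sqrt (2 * w * l)
  have hr : 0 < r := Real.sqrt_pos.2 (by positivity)
  have hr2 : r ^ 2 = 2 * w * l := Real.sq_sqrt (by positivity)
  set T := 2 / 3 * a * l + r with hT_def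
  have hT : 0 < T := by positivity
  have hrT : r ≤ T := by nlinarith [mul_nonneg ha hl.le]
  have hθa : 1 - 2 * l / T * a / 3 = r / T := by field_simp; ring
  refine ⟨2 * l / T, by positivity, ?_, ?_⟩
  · rw [div_mul_eq_mul_div, div_lt_iff₀ hT]; linarith
  · rw [hθa]
    have hw' : w = r ^ 2 / (2 * l) := by field_simp; linarith
    rw [hw']
    field_simp
    linarith

theorem condExp_exp_mul_le_exp_condExp_sq {Ω : Type*} {m m0 : MeasurableSpace Ω}
    {μ : Measure Ω} [IsFiniteMeasure μ] (hm : m ≤ m0) {Y : Ω → ℝ} {a θ : ℝ}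
    (hY : AEStronglyMeasurable Y μ) (hYa : ∀ ω, |Y ω| ≤ a) (hY0 : μ[Y|m] =ᵐ[μ] 0)
    (hθ : 0 ≤ θ) (hθa : θ * a < 3) :
    μ[fun ω => Real.exp (θ * Y ω)|m] ≤ᵐ[μ]
      fun ω => Real.exp (θ ^ 2 / (2 * (1 - θ * a / 3)) * (μ[fun ω => Y ω ^ 2|m]) ω) := by
  set κ := θ ^ 2 / (2 * (1 - θ * a / 3))
  have hint : Integrable Y μ :=
    .of_bound hY a (ae_of_all _ fun ω => by simpa [Real.norm_eq_abs] using hYa ω)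
  have hint2 : Integrable (fun ω => Y ω ^ 2) μ :=
    .of_bound (hY.pow 2) (a ^ 2) (ae_of_all _ fun ω => by
      simpa [Real.norm_eq_abs, abs_pow] using pow_le_pow_left₀ (abs_nonneg _) (hYa ω) 2)
  have hintE : Integrable (fun ω => Real.exp (θ * Y ω)) μ :=
    .of_bound (Real.continuous_exp.comp_aestronglyMeasurable (hY.const_mul θ)) (Real.exp (θ * a))
      (ae_of_all _ fun ω => by
        rw [Real.norm_eq_abs, abs_of_pos (Real.exp_pos _), Real.exp_le_exp]
        exact mul_le_mul_of_nonneg_left ((le_abs_self _).trans (hYa ω)) hθ)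
  set F : Ω → ℝ := fun ω => 1 + θ * Y ω + κ * Y ω ^ 2
  have hF : F = (fun _ => 1) + (θ • Y + κ • fun ω => Y ω ^ 2) := by ext ω; simp [F, add_assoc]
  have hintF : Integrable F μ := by
    rw [hF]; exact (integrable_const 1).add ((hint.smul θ).add (hint2.smul κ))
  have hquad (ω : Ω) : Real.exp (θ * Y ω) ≤ F ω := by
    have hθY : θ * Y ω ≤ θ * a := mul_le_mul_of_nonneg_left ((le_abs_self _).trans (hYa ω)) hθ
    exact (Real.exp_le_one_add_add_sq_div hθY (by nlinarith [(abs_nonneg _).trans (hYa ω)])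
      hθa).trans_eq (by simp only [F, κ]; ring)
  have hlin : μ[F|m] =ᵐ[μ] (fun _ => 1) + (θ • μ[Y|m] + κ • μ[fun ω => Y ω ^ 2|m]) := by
    rw [hF]
    refine (condExp_add (integrable_const 1) ((hint.smul θ).add (hint2.smul κ)) m).trans ?_
    rw [condExp_const hm]
    exact Filter.EventuallyEq.rfl.add ((condExp_add (hint.smul θ) (hint2.smul κ) m).trans
      ((condExp_smul θ Y m).add (condExp_smul κ _ m)))
  filter_upwards [condExp_mono (m := m) hintE hintF (ae_of_all _ hquad), hlin, hY0]
    with ω hle hlin hY0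
  calc (μ[fun ω => Real.exp (θ * Y ω)|m]) ω ≤ (μ[F|m]) ω := hle
    _ = 1 + κ * (μ[fun ω => Y ω ^ 2|m]) ω := by simp [hlin, hY0]
    _ ≤ Real.exp (κ * (μ[fun ω => Y ω ^ 2|m]) ω) := by
      linarith [Real.add_one_le_exp (κ * (μ[fun ω => Y ω ^ 2|m]) ω)]

theorem MeasureTheory.Supermartingale.mul_measureReal_exists_le_le_integral {Ω : Type*}
    {m0 : MeasurableSpace Ω} {μ : Measure Ω} [IsFiniteMeasure μ] {ℱ : Filtration ℕ m0}
    {N : ℕ → Ω → ℝ} (hN : Supermartingale N ℱ μ) (hN0 : ∀ t ω, 0 ≤ N t ω) (ε : ℝ) (n : ℕ) :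
    ε * μ.real {ω | ∃ t ≤ n, ε ≤ N t ω} ≤ ∫ ω, N 0 ω ∂μ := by
  set A := {ω | ∃ t ≤ n, ε ≤ N t ω}
  set τ : Ω → ℕ∞ := fun ω => (hittingBtwn N (Set.Ici ε) 0 n ω : ℕ)
  have hτ : IsStoppingTime ℱ τ :=
    hN.stronglyAdapted.adapted.isStoppingTime_hittingBtwn measurableSet_Ici
  have hτn (ω : Ω) : τ ω ≤ n := by simpa [τ] using hittingBtwn_le (u := N) (m := n) ω
  have hA : MeasurableSet A := by
    have : A = ⋃ t ∈ Set.Iic n, {ω | ε ≤ N t ω} := by ext ω; simp [A]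
    rw [this]
    exact .biUnion (Set.to_countable _) fun t _ =>
      measurableSet_le measurable_const ((hN.stronglyMeasurable t).measurable.le (ℱ.le t))
  have hint : Integrable (stoppedValue N τ) μ := by
    have h := (hN.neg.integrable_stoppedValue hτ hτn).neg
    rwa [show stoppedValue (-N) τ = -stoppedValue N τ from rfl, neg_neg] at h
  have hε_le (ω : Ω) (hω : ω ∈ A) : ε ≤ stoppedValue N τ ω := by
    obtain ⟨t, htn, ht⟩ := hω
    exact stoppedValue_hittingBtwn_mem ⟨t, ⟨t.zero_le, htn⟩, ht⟩
  have hopt : ∫ ω, stoppedValue N τ ω ∂μ ≤ ∫ ω, N 0 ω ∂μ := by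
    have := hN.neg.expected_stoppedValue_mono (isStoppingTime_const ℱ 0) hτ
      (fun ω => bot_le) hτn
    simpa [stoppedValue, integral_neg] using this
  calc ε * μ.real A ≤ ∫ ω in A, stoppedValue N τ ω ∂μ :=
        setIntegral_ge_of_const_le_real hA (measure_ne_top μ A) hε_le hint.integrableOn
    _ ≤ ∫ ω, stoppedValue N τ ω ∂μ :=
        setIntegral_le_integral hint (ae_of_all _ fun ω => hN0 _ _)
    _ ≤ ∫ ω, N 0 ω ∂μ := hopt

theorem measure_le_of_peeling {Ω : Type*} {m0 : MeasurableSpace Ω} {μ : Measure Ω}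
    {S v : Ω → ℝ} {E : ℝ → Set Ω} (hE : Antitone E) {w₀ β : ℝ} {M : ℕ} {ε : ℝ≥0∞}
    (hw₀ : 0 < w₀) (hβ : 1 < β) (hM : 0 < M) (hv : ∀ ω, w₀ ≤ v ω ∧ v ω ≤ β ^ M * w₀)
    (hSv : ∀ᵐ ω ∂μ, S ω ≤ v ω) (hSE : ∀ w, 0 < w → μ {ω | S ω ≤ w ∧ ω ∈ E w} ≤ ε) :
    μ {ω | ω ∈ E (β * v ω)} ≤ M * ε := by
  set B : ℕ → Set Ω := fun j => {ω | S ω ≤ β ^ (j + 1) * w₀ ∧ ω ∈ E (β ^ (j + 1) * w₀)}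
  have hcover : {ω | ω ∈ E (β * v ω)} ≤ᵐ[μ] ⋃ j ∈ range M, B j := by
    filter_upwards [hSv] with ω hS hω
    obtain ⟨j, hjM, hj, hj'⟩ := exists_pow_le_le_pow_succ hβ hM
      ((one_le_div hw₀).2 (hv ω).1) ((div_le_iff₀ hw₀).2 (hv ω).2)
    rw [le_div_iff₀ hw₀] at hj
    rw [div_le_iff₀ hw₀] at hj'
    refine Set.mem_biUnion (mem_range.2 hjM) ⟨hS.trans hj', hE ?_ hω⟩
    calc β ^ (j + 1) * w₀ = β * (β ^ j * w₀) := by ring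
      _ ≤ β * v ω := by gcongr
  calc μ {ω | ω ∈ E (β * v ω)} ≤ μ (⋃ j ∈ range M, B j) := measure_mono_ae hcover
    _ ≤ ∑ j ∈ range M, μ (B j) := measure_biUnion_finset_le _ _
    _ ≤ ∑ j ∈ range M, ε := sum_le_sum fun j _ => hSE _ (by positivity)
    _ = M * ε := by simp

theorem ofReal_one_sub_le_measure_of_compl_le {Ω : Type*} {m0 : MeasurableSpace Ω} {μ : Measure Ω}
    [IsProbabilityMeasure μ] {s : Set Ω} {x : ℝ} (hx : 0 ≤ x) (hs : μ sᶜ ≤ ENNReal.ofReal x) :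
    ENNReal.ofReal (1 - x) ≤ μ s := by
  rw [ENNReal.ofReal_sub _ hx, ENNReal.ofReal_one, tsub_le_iff_right, ← measure_univ (μ := μ)]
  exact (measure_univ_le_add_compl s).trans (by gcongr)

namespace Freedman

variable {Ω : Type*} {m0 : MeasurableSpace Ω}

def partialSum (X : ℕ → Ω → ℝ) (t : ℕ) (ω : Ω) : ℝ := ∑ k ∈ Icc 1 t, X k ω

noncomputable def condVarSum (μ : Measure Ω) (ℱ : Filtration ℕ m0) (X : ℕ → Ω → ℝ) (t : ℕ)
    (ω : Ω) : ℝ :=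
  ∑ k ∈ Icc 1 t, (μ[fun ω' => X k ω' ^ 2|ℱ (k - 1)]) ω

noncomputable def expProcess (μ : Measure Ω) (ℱ : Filtration ℕ m0) (X : ℕ → Ω → ℝ) (θ κ : ℝ)
    (t : ℕ) (ω : Ω) : ℝ :=
  Real.exp (θ * partialSum X t ω - κ * condVarSum μ ℱ X t ω)

variable {μ : Measure Ω} {ℱ : Filtration ℕ m0} {X : ℕ → Ω → ℝ} {a : ℝ}

theorem partialSum_succ (X : ℕ → Ω → ℝ) (t : ℕ) (ω : Ω) :
    partialSum X (t + 1) ω = partialSum X t ω + X (t + 1) ω :=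
  sum_Icc_succ_top (by omega) _

theorem condVarSum_succ (t : ℕ) (ω : Ω) :
    condVarSum μ ℱ X (t + 1) ω = condVarSum μ ℱ X t ω + (μ[fun ω' => X (t + 1) ω' ^ 2|ℱ t]) ω :=
  sum_Icc_succ_top (by omega) _

theorem abs_partialSum_le (hXa : ∀ k ω, |X k ω| ≤ a) (t : ℕ) (ω : Ω) :
    |partialSum X t ω| ≤ t * a := by
  calc |partialSum X t ω| ≤ ∑ k ∈ Icc 1 t, |X k ω| := abs_sum_le_sum_abs _ _
    _ ≤ ∑ k ∈ Icc 1 t, a := sum_le_sum fun k _ => hXa k ω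
    _ = t * a := by simp

theorem stronglyMeasurable_partialSum (hX : StronglyAdapted ℱ X) (t : ℕ) :
    StronglyMeasurable[ℱ t] (partialSum X t) :=
  Finset.stronglyMeasurable_fun_sum _ fun k hk => (hX k).mono (ℱ.mono (mem_Icc.1 hk).2)

theorem stronglyMeasurable_condVarSum {s t : ℕ} (hst : s ≤ t + 1) :
    StronglyMeasurable[ℱ t] (condVarSum μ ℱ X s) :=
  Finset.stronglyMeasurable_fun_sum _ fun k hk =>
    stronglyMeasurable_condExp.mono (ℱ.mono (by have := (mem_Icc.1 hk).2; omega))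

theorem ae_monotone_condVarSum : ∀ᵐ ω ∂μ, Monotone fun t => condVarSum μ ℱ X t ω := by
  have hnonneg : ∀ᵐ ω ∂μ, ∀ k, 0 ≤ (μ[fun ω' => X k ω' ^ 2|ℱ (k - 1)]) ω :=
    ae_all_iff.2 fun k => condExp_nonneg (ae_of_all _ fun ω => sq_nonneg _)
  filter_upwards [hnonneg] with ω hω s t hst
  exact sum_le_sum_of_subset_of_nonneg (Icc_subset_Icc_right hst) fun k _ _ => hω k

theorem ae_condVarSum_nonneg (t : ℕ) : ∀ᵐ ω ∂μ, 0 ≤ condVarSum μ ℱ X t ω := by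
  filter_upwards [ae_monotone_condVarSum (μ := μ) (ℱ := ℱ) (X := X)] with ω hω
  simpa [condVarSum] using hω (Nat.zero_le t)

theorem stronglyAdapted_expProcess (hX : StronglyAdapted ℱ X) (θ κ : ℝ) :
    StronglyAdapted ℱ (expProcess μ ℱ X θ κ) := fun t =>
  Real.continuous_exp.comp_stronglyMeasurable
    (((stronglyMeasurable_partialSum hX t).const_mul θ).sub
      ((stronglyMeasurable_condVarSum t.le_succ).const_mul κ))

theorem integrable_expProcess [IsFiniteMeasure μ] (hX : StronglyAdapted ℱ X)
    (hXa : ∀ k ω, |X k ω| ≤ a) {θ κ : ℝ} (hθ : 0 ≤ θ) (hκ : 0 ≤ κ) (t : ℕ) :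
    Integrable (expProcess μ ℱ X θ κ t) μ := by
  refine .of_bound (((stronglyAdapted_expProcess hX θ κ t).mono (ℱ.le t)).aestronglyMeasurable)
    (Real.exp (θ * (t * a))) ?_
  filter_upwards [ae_condVarSum_nonneg t] with ω hS
  rw [Real.norm_eq_abs, expProcess, abs_of_pos (Real.exp_pos _), Real.exp_le_exp]
  have := mul_le_mul_of_nonneg_left (abs_le.1 (abs_partialSum_le hXa t ω)).2 hθ
  nlinarith [mul_nonneg hκ hS]

theorem supermartingale_expProcess [IsFiniteMeasure μ] (hX : StronglyAdapted ℱ X)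
    (hXa : ∀ k ω, |X k ω| ≤ a) (hX0 : ∀ k, 1 ≤ k → μ[X k|ℱ (k - 1)] =ᵐ[μ] 0)
    {θ : ℝ} (hθ : 0 ≤ θ) (hθa : θ * a < 3) :
    Supermartingale (expProcess μ ℱ X θ (θ ^ 2 / (2 * (1 - θ * a / 3)))) ℱ μ := by
  set κ := θ ^ 2 / (2 * (1 - θ * a / 3))
  have hκ : 0 ≤ κ := div_nonneg (sq_nonneg θ) (by linarith)
  refine supermartingale_nat (stronglyAdapted_expProcess hX θ κ)
    (integrable_expProcess hX hXa hθ hκ) fun t => ?_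
  set G : Ω → ℝ := fun ω => Real.exp (θ * partialSum X t ω - κ * condVarSum μ ℱ X (t + 1) ω)
  set E : Ω → ℝ := fun ω => Real.exp (θ * X (t + 1) ω)
  have hG : StronglyMeasurable[ℱ t] G := Real.continuous_exp.comp_stronglyMeasurable
    (((stronglyMeasurable_partialSum hX t).const_mul θ).sub
      ((stronglyMeasurable_condVarSum le_rfl).const_mul κ))
  have hNGE : expProcess μ ℱ X θ κ (t + 1) = G * E := by
    ext ω
    simp only [expProcess, partialSum_succ, Pi.mul_apply, G, E, ← Real.exp_add]
    ring_nf
  have hE : Integrable E μ := .of_bound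
    (Real.continuous_exp.comp_aestronglyMeasurable
      ((((hX (t + 1)).mono (ℱ.le _)).aestronglyMeasurable).const_mul θ))
    (Real.exp (θ * a)) (ae_of_all _ fun ω => by
      rw [Real.norm_eq_abs, abs_of_pos (Real.exp_pos _), Real.exp_le_exp]
      exact mul_le_mul_of_nonneg_left ((le_abs_self _).trans (hXa _ ω)) hθ)
  have hmgf := condExp_exp_mul_le_exp_condExp_sq (ℱ.le t)
    ((hX (t + 1)).mono (ℱ.le _)).aestronglyMeasurable (hXa (t + 1)) (hX0 (t + 1) (by omega)) hθ hθa
  rw [hNGE]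
  filter_upwards [condExp_mul_of_stronglyMeasurable_left hG
    (hNGE ▸ integrable_expProcess hX hXa hθ hκ (t + 1)) hE, hmgf] with ω hpull hmgf
  rw [hpull, Pi.mul_apply]
  calc G ω * (μ[E|ℱ t]) ω
      ≤ G ω * Real.exp (κ * (μ[fun ω' => X (t + 1) ω' ^ 2|ℱ t]) ω) :=
        mul_le_mul_of_nonneg_left hmgf (Real.exp_pos _).le
    _ = expProcess μ ℱ X θ κ t ω := by
        simp only [G, expProcess, condVarSum_succ, ← Real.exp_add]
        ring_nf

theorem measure_le_exp_neg [IsProbabilityMeasure μ] (hX : StronglyAdapted ℱ X)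
    (hXa : ∀ k ω, |X k ω| ≤ a) (hX0 : ∀ k, 1 ≤ k → μ[X k|ℱ (k - 1)] =ᵐ[μ] 0)
    {w l : ℝ} (hw : 0 < w) (hl : 0 < l) (n : ℕ) :
    μ {ω | condVarSum μ ℱ X n ω ≤ w ∧
      ∃ t ≤ n, 2 / 3 * a * l + Real.sqrt (2 * w * l) ≤ partialSum X t ω} ≤
      ENNReal.ofReal (Real.exp (-l)) := by
  have ha : 0 ≤ a := (abs_nonneg _).trans (hXa 0 (nonempty_of_isProbabilityMeasure μ).some)
  obtain ⟨θ, hθ, hθa, hl_le⟩ := exists_bernstein_exponent ha hw hl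
  set κ := θ ^ 2 / (2 * (1 - θ * a / 3))
  have hκ : 0 ≤ κ := div_nonneg (sq_nonneg θ) (by linarith)
  have hmax :=
    (supermartingale_expProcess hX hXa hX0 hθ.le hθa).mul_measureReal_exists_le_le_integral
      (fun _ _ => (Real.exp_pos _).le) (Real.exp l) n
  have hN0 : ∫ ω, expProcess μ ℱ X θ κ 0 ω ∂μ = 1 := by simp [expProcess, partialSum, condVarSum]
  rw [hN0] at hmax
  have hsub : {ω | condVarSum μ ℱ X n ω ≤ w ∧
      ∃ t ≤ n, 2 / 3 * a * l + Real.sqrt (2 * w * l) ≤ partialSum X t ω} ≤ᵐ[μ]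
      {ω | ∃ t ≤ n, Real.exp l ≤ expProcess μ ℱ X θ κ t ω} := by
    filter_upwards [ae_monotone_condVarSum] with ω hmono ⟨hS, t, htn, hZ⟩
    refine ⟨t, htn, Real.exp_le_exp.2 ?_⟩
    calc l ≤ θ * (2 / 3 * a * l + Real.sqrt (2 * w * l)) - κ * w := hl_le
      _ ≤ θ * partialSum X t ω - κ * condVarSum μ ℱ X t ω := by
        gcongr
        exact (hmono htn).trans hS
  calc _ ≤ μ {ω | ∃ t ≤ n, Real.exp l ≤ expProcess μ ℱ X θ κ t ω} := measure_mono_ae hsub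
    _ = ENNReal.ofReal (μ.real {ω | ∃ t ≤ n, Real.exp l ≤ expProcess μ ℱ X θ κ t ω}) :=
      (ofReal_measureReal (measure_ne_top _ _)).symm
    _ ≤ ENNReal.ofReal (Real.exp (-l)) := by
      gcongr
      rw [Real.exp_neg, ← one_div, le_div_iff₀ (Real.exp_pos l)]
      linarith

theorem measure_le_mul_exp_neg [IsProbabilityMeasure μ] (hX : StronglyAdapted ℱ X)
    (hXa : ∀ k ω, |X k ω| ≤ a) (hX0 : ∀ k, 1 ≤ k → μ[X k|ℱ (k - 1)] =ᵐ[μ] 0) {n : ℕ}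
    {v : Ω → ℝ} (hSv : ∀ᵐ ω ∂μ, condVarSum μ ℱ X n ω ≤ v ω) {w₀ β l : ℝ} {M : ℕ}
    (hw₀ : 0 < w₀) (hβ : 1 < β) (hM : 0 < M) (hv : ∀ ω, w₀ ≤ v ω ∧ v ω ≤ β ^ M * w₀)
    (hl : 0 < l) :
    μ {ω | ∃ t ≤ n, 2 / 3 * a * l + Real.sqrt (2 * (β * v ω) * l) ≤ partialSum X t ω} ≤
      M * ENNReal.ofReal (Real.exp (-l)) := by
  refine measure_le_of_peeling (E := fun w =>
      {ω | ∃ t ≤ n, 2 / 3 * a * l + Real.sqrt (2 * w * l) ≤ partialSum X t ω})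
    (fun w w' hww' ω ⟨t, htn, ht⟩ => ⟨t, htn, le_trans (by gcongr) ht⟩)
    hw₀ hβ hM hv hSv fun w hw => measure_le_exp_neg hX hXa hX0 hw hl n

end Freedman

theorem stmt_10_general {Ω : Type*} [m : MeasurableSpace Ω] (μ : Measure Ω) [IsProbabilityMeasure μ]
    (ℱ : Filtration ℕ m) (n : ℕ) (X : ℕ → Ω → ℝ) (v : Ω → ℝ)
    (a a1 a2 β δ : ℝ) (ha1 : 0 < a1) (ha12 : a1 < a2) (hβ : 1 < β)
    (hδ : δ ∈ Set.Ioo (0 : ℝ) 1)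
    (hadapted : ∀ k, StronglyMeasurable[ℱ k] (X k))
    (hbdd : ∀ k ω, |X k ω| ≤ a)
    (hmd : ∀ k, 1 ≤ k → μ[X k|ℱ (k - 1)] =ᵐ[μ] 0)
    (hvar : ∀ᵐ ω ∂μ,
      ∑ k ∈ Finset.Icc 1 n, (μ[fun ω' => (X k ω') ^ 2|ℱ (k - 1)]) ω ≤ v ω)
    (hv : ∀ ω, a1 * n ≤ v ω ∧ v ω ≤ a2 * n) :
    ENNReal.ofReal (1 - (1 + Real.logb β (a2 / a1)) * δ) ≤
      μ {ω | ∀ t ∈ Finset.Icc 1 n,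
        ∑ k ∈ Finset.Icc 1 t, X k ω <
          (2 / 3) * a * Real.log (1 / δ) + Real.sqrt (2 * β * v ω * Real.log (1 / δ))} := by
  obtain ⟨hδ0, hδ1⟩ := hδ
  set L := Real.logb β (a2 / a1)
  have hL : 0 < L := Real.logb_pos hβ ((one_lt_div ha1).2 ha12)
  rcases Nat.eq_zero_or_pos n with rfl | hn
  · simp
    positivity
  set M := ⌈L⌉₊
  have hvM (ω : Ω) : a1 * n ≤ v ω ∧ v ω ≤ β ^ M * (a1 * n) := by
    refine ⟨(hv ω).1, (hv ω).2.trans ?_⟩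
    calc a2 * n = a2 / a1 * (a1 * n) := by field_simp
      _ ≤ β ^ M * (a1 * n) := by
        gcongr; exact Real.le_pow_natCeil_logb hβ (div_pos (ha1.trans ha12) ha1)
  have hbad := Freedman.measure_le_mul_exp_neg hadapted hbdd hmd hvar
    (by positivity) hβ (Nat.ceil_pos.2 hL) hvM (Real.log_pos ((one_lt_div hδ0).2 hδ1))
  have hδl : Real.exp (-Real.log (1 / δ)) = δ := by
    rw [Real.exp_neg, Real.exp_log (by positivity), one_div, inv_inv]
  rw [hδl] at hbad
  refine ofReal_one_sub_le_measure_of_compl_le (by positivity)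
    ((measure_mono ?_).trans (hbad.trans ?_))
  · intro ω hω
    simp only [Set.mem_compl_iff, Set.mem_ofPred_eq, not_forall, not_lt] at hω
    obtain ⟨t, ht, hZ⟩ := hω
    exact ⟨t, (mem_Icc.1 ht).2, by rwa [← mul_assoc 2]⟩
  · rw [← ENNReal.ofReal_natCast, ← ENNReal.ofReal_mul (by positivity)]
    gcongr
    linarith [Nat.ceil_lt_add_one hL.le]

/-- Bernstein's inequality for martingales with a random bound `v` on the sum of
conditional variances: if `|X_k| ≤ a`, `E[X_k | ℱ_{k-1}] = 0`, and
`∑_{k=1}^n E[X_k² | ℱ_{k-1}] ≤ v` with `v ∈ [a₁ n, a₂ n]`, then for any `β > 1`,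
with probability at least `1 - (1 + log_β (a₂/a₁)) δ`,
`max_{t ≤ n} Z_t < (2/3) a ln(1/δ) + sqrt(2 β v ln(1/δ))` where `Z_t = ∑_{k=1}^t X_k`. -/
theorem stmt_10 {Ω : Type*} [m : MeasurableSpace Ω] (μ : Measure Ω) [IsProbabilityMeasure μ]
    (ℱ : Filtration ℕ m) (n : ℕ) (X : ℕ → Ω → ℝ) (v : Ω → ℝ)
    (a a1 a2 β δ : ℝ) (ha : 0 < a) (ha1 : 0 < a1) (ha12 : a1 < a2) (hβ : 1 < β)
    (hδ : δ ∈ Set.Ioo (0 : ℝ) 1)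
    (hadapted : ∀ k, StronglyMeasurable[ℱ k] (X k))
    (hbdd : ∀ k ω, |X k ω| ≤ a)
    (hmd : ∀ k, 1 ≤ k → μ[X k|ℱ (k - 1)] =ᵐ[μ] 0)
    (hvar : ∀ᵐ ω ∂μ,
      ∑ k ∈ Finset.Icc 1 n, (μ[fun ω' => (X k ω') ^ 2|ℱ (k - 1)]) ω ≤ v ω)
    (hv : ∀ ω, a1 * n ≤ v ω ∧ v ω ≤ a2 * n) :
    ENNReal.ofReal (1 - (1 + Real.logb β (a2 / a1)) * δ) ≤
      μ {ω | ∀ t ∈ Finset.Icc 1 n,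
        ∑ k ∈ Finset.Icc 1 t, X k ω <
          (2 / 3) * a * Real.log (1 / δ) + Real.sqrt (2 * β * v ω * Real.log (1 / δ))} :=
  stmt_10_general (m := m) μ ℱ n X v a a1 a2 β δ ha1 ha12 hβ hδ hadapted hbdd hmd hvar hv
end

section
/- Let u_1, ..., u_T be vectors in R^n with ||u_t||_2 \le r for all t, and let V_t = \sum_{s=1}^t u_s u_s^T + \varepsilon I for some \varepsilon > 0. Then \sum_{t=1}^T u_t^T V_t^{-1} u_t \le n ln(r^2 T / \varepsilon + 1). -/
/-! By the matrix determinant lemma, `det V_{t-1} = det V_t * (1 - u_tᵀ V_t⁻¹ u_t)`; as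
`x ≤ -log (1 - x)`, each summand is at most `log det V_t - log det V_{t-1}`, and the sum
telescopes to `log (det V_T / εⁿ)`. AM–GM on the eigenvalues gives
`det V_T ≤ (tr V_T / n)ⁿ ≤ (ε + r² T)ⁿ`. -/

open Matrix Finset

namespace Matrix

variable {m : Type*} [Fintype m] [DecidableEq m]

theorem det_sub_vecMulVec {R : Type*} [CommRing R] {A : Matrix m m R} (hA : IsUnit A.det)
    (u v : m → R) : (A - vecMulVec u v).det = A.det * (1 - v ⬝ᵥ (A⁻¹ *ᵥ u)) := by
  have h := det_add_replicateCol_mul_replicateRow (ι := Unit) hA (-u) v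
  rw [← vecMulVec_eq, neg_vecMulVec, ← sub_eq_add_neg] at h
  rw [h, det_unique (1 + _), Matrix.mul_assoc, ← replicateCol_mulVec]
  simp [replicateRow_mul_replicateCol_apply, mulVec_neg, sub_eq_add_neg]

theorem PosDef.dotProduct_inv_add_vecMulVec_le_log_det_sub {B : Matrix m m ℝ} (hB : B.PosDef)
    (v : m → ℝ) :
    v ⬝ᵥ ((B + vecMulVec v v)⁻¹ *ᵥ v) ≤ Real.log (B + vecMulVec v v).det - Real.log B.det := by
  set A := B + vecMulVec v v
  set x := v ⬝ᵥ (A⁻¹ *ᵥ v)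
  have hA : A.PosDef := hB.add_posSemidef (by simpa using posSemidef_vecMulVec_self_star v)
  have hdet : B.det = A.det * (1 - x) := by
    simpa [A] using det_sub_vecMulVec hA.det_pos.ne'.isUnit v v
  have hx : 0 < 1 - x := pos_of_mul_pos_right (hdet ▸ hB.det_pos) hA.det_pos.le
  calc x ≤ -Real.log (1 - x) := by linarith [Real.log_le_sub_one_of_pos hx]
    _ = Real.log A.det - Real.log B.det := by
      rw [hdet, Real.log_mul hA.det_pos.ne' hx.ne']
      ring

theorem sum_dotProduct_inv_mulVec_le_log_det_sub {T : ℕ} (W : ℕ → Matrix m m ℝ)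
    (v : Fin T → m → ℝ) (hW : ∀ t : Fin T, (W t).PosDef)
    (hstep : ∀ t : Fin T, W (t + 1) = W t + vecMulVec (v t) (v t)) :
    ∑ t, v t ⬝ᵥ ((W (t + 1))⁻¹ *ᵥ v t) ≤ Real.log (W T).det - Real.log (W 0).det := by
  calc ∑ t, v t ⬝ᵥ ((W (t + 1))⁻¹ *ᵥ v t)
      ≤ ∑ t : Fin T, (Real.log (W (t + 1)).det - Real.log (W t).det) := by
        refine sum_le_sum fun t _ => ?_
        rw [hstep t]
        exact (hW t).dotProduct_inv_add_vecMulVec_le_log_det_sub (v t)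
    _ = Real.log (W T).det - Real.log (W 0).det := by
        rw [Fin.sum_univ_eq_sum_range (fun k => Real.log (W (k + 1)).det - Real.log (W k).det),
          sum_range_sub (fun k => Real.log (W k).det)]

theorem PosSemidef.det_le_trace_div_card_pow {A : Matrix m m ℝ} (hA : A.PosSemidef) :
    A.det ≤ (A.trace / Fintype.card m) ^ Fintype.card m := by
  rcases isEmpty_or_nonempty m with hm | hm
  · simp
  set N := Fintype.card m
  set ev := hA.1.eigenvalues
  have hN : (N : ℝ) ≠ 0 := Nat.cast_ne_zero.mpr Fintype.card_ne_zero
  have hev : ∀ i, 0 ≤ ev i := hA.eigenvalues_nonneg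
  have amgm := Real.geom_mean_le_arith_mean_weighted univ (fun _ => (N : ℝ)⁻¹) ev
    (fun _ _ => by positivity) (by simp [N, hN]) (fun i _ => hev i)
  calc A.det = ∏ i, (ev i ^ (N : ℝ)⁻¹) ^ N := by
        rw [hA.1.det_eq_prod_eigenvalues]
        simp only [RCLike.ofReal_real_eq_id, id]
        exact prod_congr rfl fun i _ =>
          (Real.rpow_inv_natCast_pow (hev i) Fintype.card_ne_zero).symm
    _ = (∏ i, ev i ^ (N : ℝ)⁻¹) ^ N := prod_pow _ _ _
    _ ≤ (∑ i, (N : ℝ)⁻¹ * ev i) ^ N :=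
        pow_le_pow_left₀ (prod_nonneg fun i _ => Real.rpow_nonneg (hev i) _) amgm N
    _ = (A.trace / N) ^ N := by
        simp [hA.1.trace_eq_sum_eigenvalues, ← mul_sum, div_eq_inv_mul, ev]

end Matrix

section RegularizedGram

variable {m : Type*} [DecidableEq m] {T : ℕ} (ε : ℝ) (u : Fin T → m → ℝ)

/-- The matrix `V` of the statement after the first `k` vectors:
`V t = regularizedGram ε u (t + 1)`, since `Fin T` is indexed from `0`. -/
def regularizedGram (k : ℕ) : Matrix m m ℝ :=
  ∑ s ∈ univ.filter (fun s : Fin T => (s : ℕ) < k), vecMulVec (u s) (u s) + ε • 1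

variable {ε u}

theorem regularizedGram_posDef [Fintype m] (hε : 0 < ε) (k : ℕ) :
    (regularizedGram ε u k).PosDef :=
  PosDef.posSemidef_add
    (posSemidef_sum _ fun s _ => by simpa using posSemidef_vecMulVec_self_star (u s))
    (PosDef.one.smul hε)

theorem regularizedGram_succ (t : Fin T) :
    regularizedGram ε u (t + 1) = regularizedGram ε u t + vecMulVec (u t) (u t) := by
  have : univ.filter (fun s : Fin T => (s : ℕ) < t + 1)
      = insert t (univ.filter fun s : Fin T => (s : ℕ) < t) := by
    ext s
    simp [le_iff_lt_or_eq, Fin.ext_iff, or_comm]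
  rw [regularizedGram, regularizedGram, this, sum_insert (by simp)]
  abel

theorem det_regularizedGram_zero [Fintype m] :
    (regularizedGram ε u 0).det = ε ^ Fintype.card m := by
  simp [regularizedGram]

theorem det_regularizedGram_le [Fintype m] (hε : 0 < ε) {c : ℝ} (hu : ∀ t, u t ⬝ᵥ u t ≤ c) :
    (regularizedGram ε u T).det ≤ (ε + T * c) ^ Fintype.card m := by
  set N := Fintype.card m
  have hA := (regularizedGram_posDef hε T (u := u)).posSemidef
  have hsum : ∑ t, u t ⬝ᵥ u t ≤ T * c := by
    simpa using sum_le_card_nsmul univ _ c fun t _ => hu t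
  have hsum_nonneg : 0 ≤ ∑ t, u t ⬝ᵥ u t :=
    sum_nonneg fun t _ => dotProduct_self_star_nonneg (u t)
  have htrace : (regularizedGram ε u T).trace = N * ε + ∑ t, u t ⬝ᵥ u t := by
    simp [regularizedGram, trace_sum, trace_vecMulVec, N, add_comm, mul_comm]
  refine hA.det_le_trace_div_card_pow.trans
    (pow_le_pow_left₀ (div_nonneg hA.trace_nonneg N.cast_nonneg) ?_ _)
  rcases N.eq_zero_or_pos with hN | hN
  · simp only [hN, Nat.cast_zero, div_zero]
    linarith
  have : (1 : ℝ) ≤ N := by exact_mod_cast hN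
  rw [div_le_iff₀ (by positivity), htrace]
  nlinarith

end RegularizedGram

theorem stmt_12_general (n T : ℕ) (r ε : ℝ) (hε : 0 < ε)
    (u : Fin T → Fin n → ℝ)
    (hu : ∀ t, Real.sqrt (∑ i, u t i ^ 2) ≤ r)
    (V : Fin T → Matrix (Fin n) (Fin n) ℝ)
    (hV : ∀ t, V t = (∑ s ∈ univ.filter (fun s => s ≤ t), vecMulVec (u s) (u s)) + ε • 1) :
    ∑ t, u t ⬝ᵥ ((V t)⁻¹ *ᵥ u t) ≤ (n : ℝ) * Real.log (r ^ 2 * T / ε + 1) := by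
  set W := regularizedGram ε u
  have hVW : ∀ t : Fin T, V t = W (t + 1) := fun t => by
    simp only [hV, W, regularizedGram, Nat.lt_succ_iff, Fin.le_def]
  have hu2 : ∀ t, u t ⬝ᵥ u t ≤ r ^ 2 := fun t => by
    simpa [dotProduct, sq] using (Real.sqrt_le_iff.mp (hu t)).2
  have hdetT : (W T).det ≤ (ε + T * r ^ 2) ^ n := by
    simpa using det_regularizedGram_le hε hu2
  calc ∑ t, u t ⬝ᵥ ((V t)⁻¹ *ᵥ u t) ≤ Real.log (W T).det - Real.log (W 0).det := by
        simpa only [hVW] using sum_dotProduct_inv_mulVec_le_log_det_sub W u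
          (fun t => regularizedGram_posDef hε t) regularizedGram_succ
    _ ≤ n * Real.log (ε + T * r ^ 2) - n * Real.log ε := by
        rw [det_regularizedGram_zero, Fintype.card_fin, Real.log_pow]
        gcongr
        rw [← Real.log_pow]
        exact Real.log_le_log (regularizedGram_posDef hε T).det_pos hdetT
    _ = n * Real.log (r ^ 2 * T / ε + 1) := by
        rw [← mul_sub, ← Real.log_div (by positivity) hε.ne']
        congr 2
        field_simp
        ring

/-- Elliptical potential / log-determinant lemma used in the analysis of Online Newton
Step: for vectors `u_1, ..., u_T` with `‖u_t‖₂ ≤ r` and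
`V_t = ∑_{s ≤ t} u_s u_sᵀ + ε I`, one has `∑_t u_tᵀ V_t⁻¹ u_t ≤ n ln(r² T / ε + 1)`. -/
theorem stmt_12 (n T : ℕ) (r ε : ℝ) (hr : 0 < r) (hε : 0 < ε)
    (u : Fin T → Fin n → ℝ)
    (hu : ∀ t, Real.sqrt (∑ i, u t i ^ 2) ≤ r)
    (V : Fin T → Matrix (Fin n) (Fin n) ℝ)
    (hV : ∀ t, V t = (∑ s ∈ univ.filter (fun s => s ≤ t), vecMulVec (u s) (u s)) + ε • 1) :
    ∑ t, u t ⬝ᵥ ((V t)⁻¹ *ᵥ u t) ≤ (n : ℝ) * Real.log (r ^ 2 * T / ε + 1) :=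
  stmt_12_general n T r ε hε u hu V hV
end

section
/- With the estimator h of x x^T defined by h[i,i] = (x_i^2 / P[i \in B]) 1{i \in B} and h[i,j] = (x_i x_j / P[i,j \in B]) 1{i,j \in B} for i \ne j, where B is the random k-subset from the algorithm-dependent sampling scheme with first index drawn from q = (|w_1|/||w||_1, ..., |w_d|/||w||_1), setting v = w and z = h w - (x x^T) w, the conditional second moment satisfies E[z_i^2] \le (2(d-1)/(k-1)) ||w||_1^2 for each i. -/
/-!
With `P j = P[i, j ∈ B]` (`P i = P[i ∈ B]`), `g j = 1{i, j ∈ B}` and `v j = x i x j w j`, the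
coordinate `z_i` is the centred Horvitz–Thompson estimator `∑ j, v j (g j - P j) / P j` of
`∑ j, v j`, so `E[z_i²] = ∑ j r, v j v r Cov(g j, g r) / (P j P r)`. With `A = (d-1)/(k-1)`,
a diagonal term is at most `v j² / P j` since `g j² ≤ g j`, and an off-diagonal one at most
`A |v j| |v r|` since `E[g j g r] ≤ A P j P r`: this is the triple ratio bound, or
`A P[i ∈ B] ≥ 1` when `j` or `r` is `i`. Drawing the first index proportionally to `|w|` gives
`|w j| ≤ A ‖w‖₁ P j`, so each of the two parts is at most `A ‖w‖₁²`.
-/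

open Finset

section HorvitzThompson

variable {Ω ι : Type*} [Fintype Ω] [Fintype ι] {μ : Ω → ℝ}

theorem sum_mul_sub_mul_sub_eq (hμ1 : ∑ ω, μ ω = 1) {f h : Ω → ℝ} {a b : ℝ}
    (hf : ∑ ω, μ ω * f ω = a) (hh : ∑ ω, μ ω * h ω = b) :
    ∑ ω, μ ω * ((f ω - a) * (h ω - b)) = ∑ ω, μ ω * (f ω * h ω) - a * b := by
  have expand : ∀ ω, μ ω * ((f ω - a) * (h ω - b)) =
      μ ω * (f ω * h ω) - b * (μ ω * f ω) - a * (μ ω * h ω) + a * b * μ ω := fun ω => by ring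
  simp only [expand, sum_add_distrib, sum_sub_distrib, ← mul_sum, hf, hh, hμ1]
  ring

theorem sum_mul_sq_sum_mul_sub_eq (hμ1 : ∑ ω, μ ω = 1) {g : Ω → ι → ℝ} {P : ι → ℝ}
    (hP : ∀ j, ∑ ω, μ ω * g ω j = P j) (u : ι → ℝ) :
    ∑ ω, μ ω * (∑ j, u j * (g ω j - P j)) ^ 2 =
      ∑ j, ∑ r, u j * u r * (∑ ω, μ ω * (g ω j * g ω r) - P j * P r) := by
  simp_rw [← sum_mul_sub_mul_sub_eq hμ1 (hP _) (hP _), mul_sum, sq, sum_mul_sum, mul_sum]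
  rw [sum_comm]
  refine sum_congr rfl fun j _ => ?_
  rw [sum_comm]
  exact sum_congr rfl fun r _ => sum_congr rfl fun ω _ => by ring

theorem div_mul_div_mul_sub_le_of_le {v p J M : ℝ} (hp : 0 < p) (hJ : J ≤ p)
    (hv : |v| ≤ M * p) : v / p * (v / p) * (J - p * p) ≤ M * |v| :=
  calc v / p * (v / p) * (J - p * p) ≤ v / p * (v / p) * p := by
        have := mul_self_nonneg (v / p)
        have := mul_pos hp hp
        nlinarith
    _ = |v| * |v| / p := by rw [abs_mul_abs_self]; field_simp
    _ ≤ |v| * (M * p) / p := by gcongr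
    _ = M * |v| := by field_simp

theorem div_mul_div_mul_sub_le_of_le_mul {v v' p p' J A : ℝ} (hp : 0 < p) (hp' : 0 < p')
    (hJ0 : 0 ≤ J) (hJ : J ≤ A * (p * p')) (hA : 1 ≤ A) :
    v / p * (v' / p') * (J - p * p') ≤ A * (|v| * |v'|) := by
  have hpp : 0 < p * p' := mul_pos hp hp'
  have hdev : |J - p * p'| ≤ A * (p * p') := abs_le.mpr ⟨by nlinarith, by nlinarith⟩
  calc v / p * (v' / p') * (J - p * p') ≤ |v / p * (v' / p') * (J - p * p')| := le_abs_self _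
    _ = |v| * |v'| * (|J - p * p'| / (p * p')) := by
        rw [abs_mul, abs_mul, abs_div, abs_div, abs_of_pos hp, abs_of_pos hp']
        field_simp
    _ ≤ |v| * |v'| * (A * (p * p') / (p * p')) := by gcongr
    _ = A * (|v| * |v'|) := by field_simp

theorem sum_mul_sq_horvitzThompson_le {g : Ω → ι → ℝ} {P v : ι → ℝ} {M A : ℝ}
    (hμ0 : ∀ ω, 0 ≤ μ ω) (hμ1 : ∑ ω, μ ω = 1) (hg0 : ∀ ω j, 0 ≤ g ω j) (hg1 : ∀ ω j, g ω j ≤ 1)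
    (hP : ∀ j, ∑ ω, μ ω * g ω j = P j) (hPpos : ∀ j, 0 < P j) (hv : ∀ j, |v j| ≤ M * P j)
    (hA : 1 ≤ A) (hJ : ∀ j r, j ≠ r → ∑ ω, μ ω * (g ω j * g ω r) ≤ A * (P j * P r)) :
    ∑ ω, μ ω * (∑ j, v j / P j * g ω j - ∑ j, v j) ^ 2 ≤
      M * ∑ j, |v j| + A * (∑ j, |v j|) ^ 2 := by
  classical
  have centred : ∀ ω, ∑ j, v j / P j * g ω j - ∑ j, v j = ∑ j, v j / P j * (g ω j - P j) :=
    fun ω => by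
      rw [← sum_sub_distrib]
      exact sum_congr rfl fun j _ => by field_simp [(hPpos j).ne']
  have hJ0 : ∀ j r, 0 ≤ ∑ ω, μ ω * (g ω j * g ω r) := fun j r =>
    sum_nonneg fun ω _ => mul_nonneg (hμ0 ω) (mul_nonneg (hg0 ω j) (hg0 ω r))
  have hJdiag : ∀ j, ∑ ω, μ ω * (g ω j * g ω j) ≤ P j := fun j =>
    hP j ▸ sum_le_sum fun ω _ =>
      mul_le_mul_of_nonneg_left (mul_le_of_le_one_right (hg0 ω j) (hg1 ω j)) (hμ0 ω)
  have hterm : ∀ j r, v j / P j * (v r / P r) * (∑ ω, μ ω * (g ω j * g ω r) - P j * P r) ≤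
      (if j = r then M * |v j| else 0) + A * (|v j| * |v r|) := by
    intro j r
    by_cases hjr : j = r
    · subst hjr
      have := div_mul_div_mul_sub_le_of_le (hPpos j) (hJdiag j) (hv j)
      simp only [if_true]
      nlinarith [abs_nonneg (v j)]
    · simpa [hjr] using div_mul_div_mul_sub_le_of_le_mul (v := v j) (v' := v r)
        (hPpos j) (hPpos r) (hJ0 j r) (hJ j r hjr) hA
  simp_rw [centred, sum_mul_sq_sum_mul_sub_eq hμ1 hP]
  calc _ ≤ ∑ j, ∑ r, ((if j = r then M * |v j| else 0) + A * (|v j| * |v r|)) :=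
        sum_le_sum fun j _ => sum_le_sum fun r _ => hterm j r
    _ = M * ∑ j, |v j| + A * (∑ j, |v j|) ^ 2 := by
        simp only [sum_add_distrib, sum_ite_eq, mem_univ, if_true, ← mul_sum, sq, sum_mul_sum]

end HorvitzThompson

noncomputable section InclusionProbabilities

variable {d k : ℕ}

def inclusionProb (d k : ℕ) (q : ℝ) : ℝ :=
  ((d : ℝ) - k) / ((d : ℝ) - 1) * q + ((k : ℝ) - 1) / ((d : ℝ) - 1)

def pairInclusionProb (d k : ℕ) (q q' : ℝ) : ℝ :=
  ((k : ℝ) - 1) * ((k : ℝ) - 2) / (((d : ℝ) - 1) * ((d : ℝ) - 2)) +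
    ((k : ℝ) - 1) * ((d : ℝ) - k) / (((d : ℝ) - 1) * ((d : ℝ) - 2)) * (q + q')

theorem one_le_sub_one_div_sub_one (hk : 2 ≤ k) (hkd : k ≤ d) :
    1 ≤ ((d : ℝ) - 1) / ((k : ℝ) - 1) := by
  have hk' : (2 : ℝ) ≤ k := by exact_mod_cast hk
  have hkd' : (k : ℝ) ≤ d := by exact_mod_cast hkd
  rw [le_div_iff₀ (by linarith)]
  linarith

theorem one_le_mul_inclusionProb (hk : 2 ≤ k) (hkd : k ≤ d) {q : ℝ} (hq : 0 ≤ q) :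
    1 ≤ ((d : ℝ) - 1) / ((k : ℝ) - 1) * inclusionProb d k q := by
  have hk' : (2 : ℝ) ≤ k := by exact_mod_cast hk
  have hkd' : (k : ℝ) ≤ d := by exact_mod_cast hkd
  have expand : ((d : ℝ) - 1) / ((k : ℝ) - 1) * inclusionProb d k q =
      1 + ((d : ℝ) - k) / ((k : ℝ) - 1) * q := by
    unfold inclusionProb
    field_simp [show (d : ℝ) - 1 ≠ 0 by linarith, show (k : ℝ) - 1 ≠ 0 by linarith]
    ring
  rw [expand]
  have : 0 ≤ ((d : ℝ) - k) / ((k : ℝ) - 1) * q :=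
    mul_nonneg (div_nonneg (by linarith) (by linarith)) hq
  linarith

theorem inclusionProb_pos (hk : 2 ≤ k) (hkd : k ≤ d) {q : ℝ} (hq : 0 ≤ q) :
    0 < inclusionProb d k q := by
  have hk' : (2 : ℝ) ≤ k := by exact_mod_cast hk
  have hkd' : (k : ℝ) ≤ d := by exact_mod_cast hkd
  have : 0 ≤ ((d : ℝ) - k) / ((d : ℝ) - 1) * q :=
    mul_nonneg (div_nonneg (by linarith) (by linarith)) hq
  have : 0 < ((k : ℝ) - 1) / ((d : ℝ) - 1) := div_pos (by linarith) (by linarith)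
  unfold inclusionProb
  linarith

theorem pairInclusionProb_pos (hk : 3 ≤ k) (hkd : k ≤ d) {q q' : ℝ} (hq : 0 ≤ q) (hq' : 0 ≤ q') :
    0 < pairInclusionProb d k q q' := by
  have hk' : (3 : ℝ) ≤ k := by exact_mod_cast hk
  have hkd' : (k : ℝ) ≤ d := by exact_mod_cast hkd
  unfold pairInclusionProb
  have hden : 0 < ((d : ℝ) - 1) * ((d : ℝ) - 2) := by nlinarith
  have : 0 ≤ ((k : ℝ) - 1) * ((d : ℝ) - k) / (((d : ℝ) - 1) * ((d : ℝ) - 2)) * (q + q') :=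
    mul_nonneg (div_nonneg (by nlinarith) hden.le) (by linarith)
  have : 0 < ((k : ℝ) - 1) * ((k : ℝ) - 2) / (((d : ℝ) - 1) * ((d : ℝ) - 2)) :=
    div_pos (by nlinarith) hden
  linarith

theorem le_mul_pairInclusionProb (hk : 3 ≤ k) (hkd : k ≤ d) {q q' : ℝ} (hq : 0 ≤ q)
    (hq' : q' ≤ 1) : q' ≤ ((d : ℝ) - 1) / ((k : ℝ) - 1) * pairInclusionProb d k q q' := by
  have hk' : (3 : ℝ) ≤ k := by exact_mod_cast hk
  have hkd' : (k : ℝ) ≤ d := by exact_mod_cast hkd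
  have expand : ((d : ℝ) - 1) / ((k : ℝ) - 1) * pairInclusionProb d k q q' =
      (((k : ℝ) - 2) + ((d : ℝ) - k) * (q + q')) / ((d : ℝ) - 2) := by
    unfold pairInclusionProb
    field_simp [show (d : ℝ) - 1 ≠ 0 by linarith, show (k : ℝ) - 1 ≠ 0 by linarith,
      show (d : ℝ) - 2 ≠ 0 by linarith]
  rw [expand, le_div_iff₀ (by linarith)]
  nlinarith

end InclusionProbabilities

theorem abs_div_sum_abs_le_one {α : Type*} [Fintype α] (w : α → ℝ) (j : α) :
    |w j| / ∑ l, |w l| ≤ 1 :=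
  div_le_one_of_le₀ (single_le_sum (fun l _ => abs_nonneg (w l)) (mem_univ j))
    (sum_nonneg fun l _ => abs_nonneg (w l))

-- Also true for `w = 0`, where the division is by zero.
theorem abs_div_sum_abs_mul_sum_abs {α : Type*} [Fintype α] (w : α → ℝ) (j : α) :
    |w j| / (∑ l, |w l|) * ∑ l, |w l| = |w j| :=
  div_mul_cancel_of_imp fun h => le_antisymm
    (h ▸ single_le_sum (f := fun l => |w l|) (fun l _ => abs_nonneg (w l)) (mem_univ j))
    (abs_nonneg _)

section SubsetSampling

variable {α : Type*} [DecidableEq α]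

def pairIndicator (i : α) (B : Finset α) (j : α) : ℝ := if i ∈ B ∧ j ∈ B then 1 else 0

-- `P[i, j ∈ B]`, which for `j = i` is `P[i ∈ B]`.
def jointInclusion (P1 : α → ℝ) (P2 : α → α → ℝ) (i j : α) : ℝ := if i = j then P1 i else P2 i j

theorem pairIndicator_nonneg (i : α) (B : Finset α) (j : α) : 0 ≤ pairIndicator i B j := by
  unfold pairIndicator; split_ifs <;> norm_num

theorem pairIndicator_le_one (i : α) (B : Finset α) (j : α) : pairIndicator i B j ≤ 1 := by
  unfold pairIndicator; split_ifs <;> norm_num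

variable {P1 : α → ℝ} {P2 : α → α → ℝ} {d k : ℕ}

theorem jointInclusion_pos {q : α → ℝ} (hk : 3 ≤ k) (hkd : k ≤ d) (hq0 : ∀ j, 0 ≤ q j)
    (hP1f : ∀ i, P1 i = inclusionProb d k (q i))
    (hP2f : ∀ i j, i ≠ j → P2 i j = pairInclusionProb d k (q i) (q j)) (i j : α) :
    0 < jointInclusion P1 P2 i j := by
  by_cases hij : i = j
  · subst hij
    simpa [jointInclusion] using hP1f i ▸ inclusionProb_pos (by omega) hkd (hq0 i)
  · simpa [jointInclusion, hij] using hP2f i j hij ▸ pairInclusionProb_pos hk hkd (hq0 i) (hq0 j)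

theorem le_mul_jointInclusion {q : α → ℝ} (hk : 3 ≤ k) (hkd : k ≤ d) (hq0 : ∀ j, 0 ≤ q j)
    (hq1 : ∀ j, q j ≤ 1) (hP1f : ∀ i, P1 i = inclusionProb d k (q i))
    (hP2f : ∀ i j, i ≠ j → P2 i j = pairInclusionProb d k (q i) (q j)) (i j : α) :
    q j ≤ ((d : ℝ) - 1) / ((k : ℝ) - 1) * jointInclusion P1 P2 i j := by
  by_cases hij : i = j
  · subst hij
    simpa [jointInclusion] using
      (hq1 i).trans (hP1f i ▸ one_le_mul_inclusionProb (by omega) hkd (hq0 i))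
  · simpa [jointInclusion, hij] using hP2f i j hij ▸ le_mul_pairInclusionProb hk hkd (hq0 i) (hq1 j)

variable [Fintype α]

theorem abs_le_mul_sum_abs_mul_jointInclusion {w : α → ℝ} (hk : 3 ≤ k) (hkd : k ≤ d)
    (hP1f : ∀ i, P1 i = inclusionProb d k (|w i| / ∑ l, |w l|))
    (hP2f : ∀ i j, i ≠ j →
      P2 i j = pairInclusionProb d k (|w i| / ∑ l, |w l|) (|w j| / ∑ l, |w l|)) (i j : α) :
    |w j| ≤ ((d : ℝ) - 1) / ((k : ℝ) - 1) * (∑ l, |w l|) * jointInclusion P1 P2 i j :=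
  calc |w j| = |w j| / (∑ l, |w l|) * ∑ l, |w l| := (abs_div_sum_abs_mul_sum_abs w j).symm
    _ ≤ ((d : ℝ) - 1) / ((k : ℝ) - 1) * jointInclusion P1 P2 i j * ∑ l, |w l| := by
        gcongr
        exact le_mul_jointInclusion hk hkd (fun j => by positivity) (abs_div_sum_abs_le_one w)
          hP1f hP2f i j
    _ = ((d : ℝ) - 1) / ((k : ℝ) - 1) * (∑ l, |w l|) * jointInclusion P1 P2 i j := by ring

theorem importanceWeighted_sub_eq (x w : α → ℝ) (i : α) (B : Finset α) :
    ∑ j, (if i = j then (x i ^ 2 / P1 i) * (if i ∈ B then (1 : ℝ) else 0)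
        else (x i * x j / P2 i j) * (if i ∈ B ∧ j ∈ B then (1 : ℝ) else 0)) * w j
      - x i * ∑ j, x j * w j =
    ∑ j, x i * x j * w j / jointInclusion P1 P2 i j * pairIndicator i B j -
      ∑ j, x i * x j * w j := by
  rw [mul_sum]
  congr 1
  · refine sum_congr rfl fun j _ => ?_
    by_cases hij : i = j
    · subst hij; simp only [jointInclusion, pairIndicator, if_true, and_self]; ring
    · simp only [jointInclusion, pairIndicator, if_neg hij]; ring
  · exact sum_congr rfl fun j _ => by ring

variable {μ : Finset α → ℝ}

theorem sum_mul_pairIndicator_eq (hP1μ : ∀ i, ∑ B ∈ univ.filter (fun B => i ∈ B), μ B = P1 i)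
    (hP2μ : ∀ i j, i ≠ j → ∑ B ∈ univ.filter (fun B => i ∈ B ∧ j ∈ B), μ B = P2 i j) (i j : α) :
    ∑ B, μ B * pairIndicator i B j = jointInclusion P1 P2 i j := by
  simp only [pairIndicator, mul_ite, mul_one, mul_zero, ← sum_filter]
  by_cases hij : i = j
  · subst hij; simpa [jointInclusion] using hP1μ i
  · simpa [jointInclusion, hij] using hP2μ i j hij

theorem sum_mul_pairIndicator_mul_le {A : ℝ} {i j r : α}
    (hP2μ : ∀ j, i ≠ j → ∑ B ∈ univ.filter (fun B => i ∈ B ∧ j ∈ B), μ B = P2 i j)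
    (htriple : ∀ j r, i ≠ j → i ≠ r → j ≠ r →
      ∑ B ∈ univ.filter (fun B => i ∈ B ∧ j ∈ B ∧ r ∈ B), μ B ≤ A * (P2 i j * P2 i r))
    (hPpos : ∀ j, 0 < jointInclusion P1 P2 i j) (hAP1 : 1 ≤ A * P1 i) (hjr : j ≠ r) :
    ∑ B, μ B * (pairIndicator i B j * pairIndicator i B r) ≤
      A * (jointInclusion P1 P2 i j * jointInclusion P1 P2 i r) := by
  have hgg : ∀ B, pairIndicator i B j * pairIndicator i B r =
      if i ∈ B ∧ j ∈ B ∧ r ∈ B then 1 else 0 := fun B => by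
    simp only [pairIndicator]; split_ifs <;> simp_all
  simp only [hgg, mul_ite, mul_one, mul_zero, ← sum_filter]
  by_cases hij : i = j
  · subst hij
    simp only [and_self_left, jointInclusion, if_pos, if_neg hjr, hP2μ r hjr]
    have hr := hPpos r
    simp only [jointInclusion, if_neg hjr] at hr
    nlinarith
  by_cases hir : i = r
  · subst hir
    simp only [and_comm (b := i ∈ _), and_self_left, jointInclusion, if_pos, if_neg hij,
      hP2μ j hij]
    have hj := hPpos j
    simp only [jointInclusion, if_neg hij] at hj
    nlinarith
  simpa [jointInclusion, hij, hir] using htriple j r hij hir hjr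

end SubsetSampling

theorem stmt_15_general (d k : ℕ) (hk : 3 ≤ k) (hkd : k ≤ d)
    (x w : Fin d → ℝ) (hx : ∀ i, |x i| ≤ 1)
    (μ : Finset (Fin d) → ℝ) (hμ0 : ∀ B, 0 ≤ μ B) (hμ1 : ∑ B : Finset (Fin d), μ B = 1)
    (P1 : Fin d → ℝ) (P2 : Fin d → Fin d → ℝ)
    (hP1μ : ∀ i : Fin d, ∑ B ∈ univ.filter (fun B : Finset (Fin d) => i ∈ B), μ B = P1 i)
    (hP2μ : ∀ i j : Fin d, i ≠ j →
      ∑ B ∈ univ.filter (fun B : Finset (Fin d) => i ∈ B ∧ j ∈ B), μ B = P2 i j)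
    (hP1f : ∀ i : Fin d, P1 i =
      (((d : ℝ) - k) / ((d : ℝ) - 1)) * (|w i| / ∑ l, |w l|) + ((k : ℝ) - 1) / ((d : ℝ) - 1))
    (hP2f : ∀ i j : Fin d, i ≠ j → P2 i j =
      ((k : ℝ) - 1) * ((k : ℝ) - 2) / (((d : ℝ) - 1) * ((d : ℝ) - 2)) +
        ((k : ℝ) - 1) * ((d : ℝ) - k) / (((d : ℝ) - 1) * ((d : ℝ) - 2)) *
          (|w i| / ∑ l, |w l| + |w j| / ∑ l, |w l|))
    (htriple : ∀ i j r : Fin d, i ≠ j → i ≠ r → j ≠ r →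
      ∑ B ∈ univ.filter (fun B : Finset (Fin d) => i ∈ B ∧ j ∈ B ∧ r ∈ B), μ B ≤
        ((d : ℝ) - 1) / ((k : ℝ) - 1) * (P2 i j * P2 i r))
    (i : Fin d) :
    ∑ B : Finset (Fin d), μ B *
        ((∑ j, (if i = j then (x i ^ 2 / P1 i) * (if i ∈ B then (1 : ℝ) else 0)
                else (x i * x j / P2 i j) * (if i ∈ B ∧ j ∈ B then (1 : ℝ) else 0)) * w j
            - x i * ∑ j, x j * w j) ^ 2)
      ≤ 2 * ((d : ℝ) - 1) / ((k : ℝ) - 1) * (∑ l, |w l|) ^ 2 := by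
  set W := ∑ l, |w l|
  set A := ((d : ℝ) - 1) / ((k : ℝ) - 1)
  set P := jointInclusion P1 P2 i
  set v : Fin d → ℝ := fun j => x i * x j * w j
  have hA : 1 ≤ A := one_le_sub_one_div_sub_one (by omega) hkd
  have hvw : ∀ j, |v j| ≤ |w j| := fun j => by
    rw [abs_mul, abs_mul]
    exact mul_le_of_le_one_left (abs_nonneg _) (mul_le_one₀ (hx i) (abs_nonneg _) (hx j))
  have hq0 : ∀ j, 0 ≤ |w j| / W := fun j => by positivity
  have hPpos := jointInclusion_pos hk hkd hq0 hP1f hP2f i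
  calc _ = ∑ B, μ B * (∑ j, v j / P j * pairIndicator i B j - ∑ j, v j) ^ 2 := by
        simp only [importanceWeighted_sub_eq, v, P]
    _ ≤ A * W * ∑ j, |v j| + A * (∑ j, |v j|) ^ 2 :=
        sum_mul_sq_horvitzThompson_le hμ0 hμ1 (pairIndicator_nonneg i) (pairIndicator_le_one i)
          (sum_mul_pairIndicator_eq hP1μ hP2μ i) hPpos
          (fun j => (hvw j).trans (abs_le_mul_sum_abs_mul_jointInclusion hk hkd hP1f hP2f i j)) hA
          fun j r hjr => sum_mul_pairIndicator_mul_le (hP2μ i) (htriple i) hPpos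
            (hP1f i ▸ one_le_mul_inclusionProb (by omega) hkd (hq0 i)) hjr
    _ ≤ A * W * W + A * W ^ 2 := by
        have : 0 ≤ ∑ j, |v j| := sum_nonneg fun j _ => abs_nonneg _
        have : ∑ j, |v j| ≤ W := sum_le_sum fun j _ => hvw j
        gcongr
    _ = 2 * ((d : ℝ) - 1) / ((k : ℝ) - 1) * W ^ 2 := by ring

/-- Variance bound for the algorithm-dependent sampling scheme.  `μ` is the distribution
of the random `k`-subset `B` of `[d]`; `P1 i = P[i ∈ B]` and `P2 i j = P[i,j ∈ B]` are its
single and pairwise inclusion probabilities, which are given by the closed-form expressions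
of the scheme whose first index is drawn proportionally to `|w_i|`; the triple-inclusion
ratio bound `P[i,j,r ∈ B] ≤ ((d-1)/(k-1)) P[i,j ∈ B] P[i,r ∈ B]` holds.  Then for the
importance-weighted estimator `h` of `x xᵀ` and `z = h w - (x xᵀ) w`, the second moment
satisfies `E[z_i²] ≤ (2(d-1)/(k-1)) ‖w‖₁²`. -/
theorem stmt_15 (d k : ℕ) (hk : 3 ≤ k) (hkd : k ≤ d)
    (x w : Fin d → ℝ) (hx : ∀ i, |x i| ≤ 1) (hw : w ≠ 0)
    (μ : Finset (Fin d) → ℝ) (hμ0 : ∀ B, 0 ≤ μ B) (hμ1 : ∑ B : Finset (Fin d), μ B = 1)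
    (P1 : Fin d → ℝ) (P2 : Fin d → Fin d → ℝ)
    (hP1μ : ∀ i : Fin d, ∑ B ∈ univ.filter (fun B : Finset (Fin d) => i ∈ B), μ B = P1 i)
    (hP2μ : ∀ i j : Fin d, i ≠ j →
      ∑ B ∈ univ.filter (fun B : Finset (Fin d) => i ∈ B ∧ j ∈ B), μ B = P2 i j)
    (hP1f : ∀ i : Fin d, P1 i =
      (((d : ℝ) - k) / ((d : ℝ) - 1)) * (|w i| / ∑ l, |w l|) + ((k : ℝ) - 1) / ((d : ℝ) - 1))
    (hP2f : ∀ i j : Fin d, i ≠ j → P2 i j =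
      ((k : ℝ) - 1) * ((k : ℝ) - 2) / (((d : ℝ) - 1) * ((d : ℝ) - 2)) +
        ((k : ℝ) - 1) * ((d : ℝ) - k) / (((d : ℝ) - 1) * ((d : ℝ) - 2)) *
          (|w i| / ∑ l, |w l| + |w j| / ∑ l, |w l|))
    (htriple : ∀ i j r : Fin d, i ≠ j → i ≠ r → j ≠ r →
      ∑ B ∈ univ.filter (fun B : Finset (Fin d) => i ∈ B ∧ j ∈ B ∧ r ∈ B), μ B ≤
        ((d : ℝ) - 1) / ((k : ℝ) - 1) * (P2 i j * P2 i r))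
    (i : Fin d) :
    ∑ B : Finset (Fin d), μ B *
        ((∑ j, (if i = j then (x i ^ 2 / P1 i) * (if i ∈ B then (1 : ℝ) else 0)
                else (x i * x j / P2 i j) * (if i ∈ B ∧ j ∈ B then (1 : ℝ) else 0)) * w j
            - x i * ∑ j, x j * w j) ^ 2)
      ≤ 2 * ((d : ℝ) - 1) / ((k : ℝ) - 1) * (∑ l, |w l|) ^ 2 :=
  stmt_15_general d k hk hkd x w hx μ hμ0 hμ1 P1 P2 hP1μ hP2μ hP1f hP2f htriple i
end

section
/- Let w* in R^d be k-sparse with support S and suppose an estimator w_hat satisfies ||w_hat - w*||_1 \le 2 ||w_hat(S) - w*||_1 < min_{i in S} |w*_i|. Let S_hat be any set of k coordinates of w_hat with largest absolute values. Then S \subseteq S_hat; in particular if |S| = k then S_hat = S. -/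
open Finset

/-- Support recovery: if `w*` is `k`-sparse with support `S`, the estimator `ŵ` satisfies
`‖ŵ - w*‖₁ ≤ 2‖ŵ(S) - w*‖₁ < min_{i ∈ S} |w*_i|`, and `Ŝ` is a set of `k` coordinates of
`ŵ` of largest absolute value, then `S ⊆ Ŝ`; in particular if `|S| = k` then `Ŝ = S`. -/
theorem stmt_17 (d k : ℕ) (wstar what : Fin d → ℝ) (S Shat : Finset (Fin d))
    (hS : ∀ i, wstar i ≠ 0 ↔ i ∈ S) (hSk : S.card ≤ k)
    (hShat : Shat.card = k)
    (htop : ∀ i ∈ Shat, ∀ j ∉ Shat, |what j| ≤ |what i|)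
    (h1 : ∑ i, |what i - wstar i| ≤ 2 * ∑ l, |(if l ∈ S then what l else 0) - wstar l|)
    (h2 : ∀ i ∈ S, 2 * ∑ l, |(if l ∈ S then what l else 0) - wstar l| < |wstar i|) :
    S ⊆ Shat ∧ (S.card = k → Shat = S) := by
  have hsub : S ⊆ Shat := by
    intro i hi
    by_contra hiS
    have hlt : (S ∩ Shat).card < Shat.card := by
      calc (S ∩ Shat).card < S.card :=
            Finset.card_lt_card ⟨Finset.inter_subset_left,
              fun h => hiS (Finset.mem_inter.1 (h hi)).2⟩
        _ ≤ k := hSk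
        _ = Shat.card := hShat.symm
    have hne : (Shat \ S).Nonempty := by
      rw [Finset.sdiff_nonempty]
      intro hss
      exact absurd (Finset.card_le_card (Finset.subset_inter hss (Finset.Subset.refl Shat)))
        (not_le_of_gt hlt)
    obtain ⟨j, hj⟩ := hne
    obtain ⟨hjShat, hjS⟩ := Finset.mem_sdiff.1 hj
    have hwj : wstar j = 0 := by
      by_contra h; exact hjS ((hS j).1 h)
    have hij : i ≠ j := fun h => hjS (h ▸ hi)
    have key : |what i - wstar i| + |what j - wstar j| ≤ ∑ l, |what l - wstar l| := by
      have := Finset.sum_le_sum_of_subset_of_nonneg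
        (Finset.subset_univ ({i, j} : Finset (Fin d)))
        (fun l _ _ => abs_nonneg (what l - wstar l))
      rwa [Finset.sum_pair hij] at this
    have h3 : |wstar i| ≤ |what i - wstar i| + |what j - wstar j| := by
      rw [hwj, sub_zero]
      have t1 : |wstar i| ≤ |what i - wstar i| + |what i| := by
        have := abs_sub_abs_le_abs_sub (wstar i) (what i)
        rw [abs_sub_comm] at this
        linarith
      have t2 : |what i| ≤ |what j| := htop j hjShat i hiS
      linarith
    have := h2 i hi
    linarith
  refine ⟨hsub, fun hc => ?_⟩
  exact (Finset.eq_of_subset_of_card_le hsub (by rw [hShat, hc])).symm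
end
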